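/- Let a, b > 0, U(z) = tanh((b/a)z), and let H, μ ∈ ℝ. If there exists a twice continuously differentiable function U¹ : ℝ → ℝ with U¹ and (U¹)' bounded on ℝ that satisfies a²·(U¹)''(z) − b²·ψ''(U(z))·U¹(z) = −(a²·H + μ)·U'(z) for all z ∈ ℝ (where ψ''(u) = 6u²−2), then μ = −a²·H. -/

import Mathlib

open Real Filter Topology intervalIntegral

private lemma my_hasDerivAt_tanh (x : ℝ) :
    HasDerivAt Real.tanh (1 - Real.tanh x ^ 2) x := by
  have hc := (Real.cosh_pos x).ne'
  have h := (Real.hasDerivAt_sinh x).div (Real.hasDerivAt_cosh x) hc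
  have hfun : Real.tanh = fun y => Real.sinh y / Real.cosh y :=
    funext fun y => Real.tanh_eq_sinh_div_cosh y
  rw [hfun]
  refine h.congr_deriv ?_
  have hsq := Real.cosh_sq_sub_sinh_sq x
  field_simp

private lemma my_tanh_sq_lt_one (x : ℝ) : Real.tanh x ^ 2 < 1 := by
  have hc := (Real.cosh_pos x)
  have hsq := Real.cosh_sq_sub_sinh_sq x
  rw [Real.tanh_eq_sinh_div_cosh]
  rw [div_pow, div_lt_one (by positivity)]
  nlinarith

private lemma my_abs_tanh_le_one (x : ℝ) : |Real.tanh x| ≤ 1 := by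
  nlinarith [my_tanh_sq_lt_one x, abs_nonneg (Real.tanh x), sq_abs (Real.tanh x)]

private lemma my_one_sub_tanh_sq (x : ℝ) :
    1 - Real.tanh x ^ 2 = 1 / Real.cosh x ^ 2 := by
  have hc := (Real.cosh_pos x).ne'
  have hsq := Real.cosh_sq_sub_sinh_sq x
  rw [Real.tanh_eq_sinh_div_cosh]
  field_simp
  linarith

private lemma my_cosh_atTop : Tendsto Real.cosh atTop atTop := by
  apply tendsto_atTop_mono (f := fun x => Real.exp x / 2)
  · intro x
    rw [Real.cosh_eq]
    nlinarith [Real.exp_pos (-x)]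
  · exact Real.tendsto_exp_atTop.atTop_div_const (by norm_num)

private lemma my_cosh_atBot : Tendsto Real.cosh atBot atTop := by
  have h : Real.cosh = fun x => Real.cosh (-x) := by
    funext x; rw [Real.cosh_neg]
  rw [h]
  exact my_cosh_atTop.comp tendsto_neg_atBot_atTop

/-- solvability condition. For `a, b > 0`, `U(z) = tanh((b/a)z)` and reals
`H, μ`: if some `C²` function `U¹` with `U¹` and `(U¹)'` bounded solves
`a² (U¹)'' − b² ψ''(U) U¹ = −(a²H + μ) U'` (with `ψ''(u) = 6u²−2`), then `μ = −a²H`. -/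
theorem stmt_6 (a b H μ : ℝ) (ha : 0 < a) (hb : 0 < b)
    (U : ℝ → ℝ) (hU : U = fun z => Real.tanh ((b / a) * z))
    (hex : ∃ U1 : ℝ → ℝ, ContDiff ℝ 2 U1 ∧
      (∃ C : ℝ, ∀ z : ℝ, |U1 z| ≤ C) ∧ (∃ C : ℝ, ∀ z : ℝ, |deriv U1 z| ≤ C) ∧
      ∀ z : ℝ, a ^ 2 * deriv (deriv U1) z - b ^ 2 * (6 * (U z) ^ 2 - 2) * U1 z
        = -(a ^ 2 * H + μ) * deriv U z) :
    μ = -(a ^ 2) * H := by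
  obtain ⟨V, hV2, ⟨C0, hC0⟩, ⟨C1, hC1⟩, heq⟩ := hex
  set k : ℝ := b / a with hkdef
  have hk0 : 0 < k := div_pos hb ha
  have hb2 : b ^ 2 = a ^ 2 * k ^ 2 := by rw [hkdef]; field_simp
  set t : ℝ → ℝ := fun z => Real.tanh (k * z) with htdef
  -- derivative of t
  have ht : ∀ z, HasDerivAt t (k * (1 - t z ^ 2)) z := by
    intro z
    have h1 : HasDerivAt (fun y : ℝ => k * y) k z := by
      simpa using (hasDerivAt_id z).const_mul k
    have h2 := (my_hasDerivAt_tanh (k * z)).comp z h1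
    have h3 : HasDerivAt t ((1 - Real.tanh (k * z) ^ 2) * k) z := h2
    convert h3 using 1
    simp only [htdef]
    ring
  set φ : ℝ → ℝ := fun z => k * (1 - t z ^ 2) with hφdef
  set φd : ℝ → ℝ := fun z => -2 * k ^ 2 * (t z * (1 - t z ^ 2)) with hφddef
  set φdd : ℝ → ℝ := fun z => -2 * k ^ 3 * (1 - t z ^ 2) * (1 - 3 * t z ^ 2) with hφdddef
  have hφ : ∀ z, HasDerivAt φ (φd z) z := by
    intro z
    have h3 := (((ht z).pow 2).const_sub 1).const_mul k
    refine h3.congr_deriv ?_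
    simp only [hφddef]
    push_cast
    ring
  have hφd : ∀ z, HasDerivAt φd (φdd z) z := by
    intro z
    have h3 := ((ht z).mul (((ht z).pow 2).const_sub 1)).const_mul (-2 * k ^ 2)
    refine h3.congr_deriv ?_
    simp only [hφdddef]
    push_cast [Pi.pow_apply]
    ring
  have hderivU : deriv U = φ := by
    funext z
    rw [hU]
    exact (ht z).deriv
  -- regularity of V
  have hVdiff : Differentiable ℝ V := hV2.differentiable (by norm_num)
  have hdV1 : ContDiff ℝ 1 (deriv V) := by
    have h2 : ContDiff ℝ (1 + 1 : ℕ) V := by exact_mod_cast hV2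
    exact (contDiff_succ_iff_deriv.mp h2).2.2
  have hdVdiff : Differentiable ℝ (deriv V) := hdV1.differentiable one_ne_zero
  set c : ℝ := a ^ 2 * H + μ with hcdef
  set W : ℝ → ℝ := fun z => a ^ 2 * (deriv V z * φ z - V z * φd z) with hWdef
  have hW : ∀ z, HasDerivAt W (-c * φ z ^ 2) z := by
    intro z
    have hV' : HasDerivAt V (deriv V z) z := (hVdiff z).hasDerivAt
    have hdV' : HasDerivAt (deriv V) (deriv (deriv V) z) z := (hdVdiff z).hasDerivAt
    have h := ((hdV'.mul (hφ z)).sub (hV'.mul (hφd z))).const_mul (a ^ 2)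
    have he := heq z
    rw [hderivU] at he
    rw [hU] at he
    have hdd : deriv (deriv V) z = (b ^ 2 * (6 * t z ^ 2 - 2) * V z - c * φ z) / a ^ 2 := by
      field_simp
      linarith
    refine h.congr_deriv ?_
    rw [hdd]
    field_simp
    simp only [hφdef, hφddef, hφdddef]
    rw [hb2]
    ring
  -- continuity of φ^2
  have hct : Continuous t := by
    have : Differentiable ℝ t := fun z => (ht z).differentiableAt
    exact this.continuous
  have hcφ : Continuous φ := by
    simp only [hφdef]
    continuity
  have hcφ2 : Continuous (fun z => φ z ^ 2) := hcφ.pow 2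
  -- FTC
  have key : ∀ R : ℝ, (∫ z in (-R)..R, -c * φ z ^ 2) = W R - W (-R) := by
    intro R
    exact integral_eq_sub_of_hasDerivAt (fun x _ => hW x)
      ((continuous_const.mul hcφ2).intervalIntegrable _ _)
  set m : ℝ := ∫ z in (-1 : ℝ)..1, φ z ^ 2 with hmdef
  have hφpos : ∀ z, 0 < φ z := by
    intro z
    have := my_tanh_sq_lt_one (k * z)
    simp only [hφdef, htdef]
    nlinarith
  have hm : 0 < m :=
    intervalIntegral_pos_of_pos (hcφ2.intervalIntegrable _ _)
      (fun x => pow_pos (hφpos x) 2) (by norm_num)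
  have hmono : ∀ R : ℝ, 1 ≤ R → m ≤ ∫ z in (-R)..R, φ z ^ 2 := by
    intro R hR
    exact integral_mono_interval (by linarith) (by norm_num) hR
      (Filter.Eventually.of_forall fun x => sq_nonneg _)
      (hcφ2.intervalIntegrable _ _)
  -- limits of W at ±∞
  have hC0' : 0 ≤ C0 := le_trans (abs_nonneg _) (hC0 0)
  have hC1' : 0 ≤ C1 := le_trans (abs_nonneg _) (hC1 0)
  set M : ℝ := a ^ 2 * (C1 * k + C0 * (2 * k ^ 2)) with hMdef
  have hWbound : ∀ z, ‖W z‖ ≤ M * |1 - t z ^ 2| := by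
    intro z
    have ha2 : (0 : ℝ) ≤ a ^ 2 := by positivity
    have h1 : |φ z| = k * |1 - t z ^ 2| := by
      simp only [hφdef, abs_mul, abs_of_pos hk0]
    have h2 : |φd z| ≤ 2 * k ^ 2 * |1 - t z ^ 2| := by
      have h2' : |t z| ≤ 1 := my_abs_tanh_le_one (k * z)
      have h2'' : |φd z| = 2 * k ^ 2 * (|t z| * |1 - t z ^ 2|) := by
        simp only [hφddef, abs_mul]
        norm_num [abs_of_nonneg (sq_nonneg k)]
      rw [h2'']
      have h2''' : |t z| * |1 - t z ^ 2| ≤ |1 - t z ^ 2| :=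
        mul_le_of_le_one_left (abs_nonneg _) h2'
      exact mul_le_mul_of_nonneg_left h2''' (by positivity)
    calc ‖W z‖ = a ^ 2 * |deriv V z * φ z - V z * φd z| := by
          rw [hWdef]
          rw [Real.norm_eq_abs, abs_mul, abs_of_pos (pow_pos ha 2)]
      _ ≤ a ^ 2 * (|deriv V z| * |φ z| + |V z| * |φd z|) := by
          have h3 : |deriv V z * φ z - V z * φd z|
              ≤ |deriv V z| * |φ z| + |V z| * |φd z| := by
            calc |deriv V z * φ z - V z * φd z|
                ≤ |deriv V z * φ z| + |V z * φd z| := abs_sub _ _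
              _ = |deriv V z| * |φ z| + |V z| * |φd z| := by
                  rw [abs_mul (deriv V z) (φ z), abs_mul (V z) (φd z)]
          exact mul_le_mul_of_nonneg_left h3 ha2
      _ ≤ a ^ 2 * (C1 * |φ z| + C0 * |φd z|) := by
          apply mul_le_mul_of_nonneg_left _ ha2
          have e1 := mul_le_mul_of_nonneg_right (hC1 z) (abs_nonneg (φ z))
          have e2 := mul_le_mul_of_nonneg_right (hC0 z) (abs_nonneg (φd z))
          linarith
      _ ≤ a ^ 2 * (C1 * (k * |1 - t z ^ 2|) + C0 * (2 * k ^ 2 * |1 - t z ^ 2|)) := by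
          apply mul_le_mul_of_nonneg_left _ ha2
          have e2 := mul_le_mul_of_nonneg_left h2 hC0'
          rw [h1]
          linarith
      _ = M * |1 - t z ^ 2| := by rw [hMdef]; ring
  have hsech_top : Tendsto (fun z => 1 - t z ^ 2) atTop (𝓝 0) := by
    have h1 : Tendsto (fun z : ℝ => k * z) atTop atTop :=
      Tendsto.const_mul_atTop hk0 tendsto_id
    have h2 : Tendsto (fun z : ℝ => Real.cosh (k * z) ^ 2) atTop atTop :=
      (tendsto_pow_atTop two_ne_zero).comp (my_cosh_atTop.comp h1)
    have h3 := h2.inv_tendsto_atTop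
    have h4 : (fun z => 1 - t z ^ 2) = fun z => (Real.cosh (k * z) ^ 2)⁻¹ := by
      funext z
      simp only [htdef]
      rw [my_one_sub_tanh_sq, one_div]
    rw [h4]
    exact h3
  have hsech_bot : Tendsto (fun z => 1 - t z ^ 2) atBot (𝓝 0) := by
    have h1 : Tendsto (fun z : ℝ => k * z) atBot atBot :=
      Tendsto.const_mul_atBot hk0 tendsto_id
    have h2 : Tendsto (fun z : ℝ => Real.cosh (k * z) ^ 2) atBot atTop :=
      (tendsto_pow_atTop two_ne_zero).comp (my_cosh_atBot.comp h1)
    have h3 := h2.inv_tendsto_atTop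
    have h4 : (fun z => 1 - t z ^ 2) = fun z => (Real.cosh (k * z) ^ 2)⁻¹ := by
      funext z
      simp only [htdef]
      rw [my_one_sub_tanh_sq, one_div]
    rw [h4]
    exact h3
  have hWtop : Tendsto W atTop (𝓝 0) :=
    squeeze_zero_norm hWbound (by simpa using hsech_top.abs.const_mul M)
  have hWbot : Tendsto W atBot (𝓝 0) :=
    squeeze_zero_norm hWbound (by simpa using hsech_bot.abs.const_mul M)
  have hdiff : Tendsto (fun R => W R - W (-R)) atTop (𝓝 0) := by
    have := hWtop.sub (hWbot.comp tendsto_neg_atTop_atBot)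
    simpa using this
  -- conclusion
  by_contra hne
  have hc0 : c ≠ 0 := by
    intro h
    apply hne
    rw [hcdef] at h
    linarith
  have hcm : 0 < |c| * m := mul_pos (abs_pos.mpr hc0) hm
  have habs : Tendsto (fun R => |W R - W (-R)|) atTop (𝓝 0) := by
    simpa using hdiff.abs
  have hev := (habs.eventually_lt_const hcm).and (eventually_ge_atTop (1 : ℝ))
  obtain ⟨R, hR1, hR2⟩ := hev.exists
  have hI := hmono R hR2
  have hIval : W R - W (-R) = -c * ∫ z in (-R)..R, φ z ^ 2 := by
    rw [← key R, intervalIntegral.integral_const_mul]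
  have habs2 : |W R - W (-R)| = |c| * ∫ z in (-R)..R, φ z ^ 2 := by
    rw [hIval, abs_mul, abs_neg, abs_of_nonneg (le_trans hm.le hI)]
  rw [habs2] at hR1
  nlinarith [abs_pos.mpr hc0]
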